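/- Let (Ω, Σ, μ) be a complete probability space, X a Banach space, and f : Ω → X a Bochner integrable function. Then f is McShane integrable (with respect to any quasi-Radon outer regular topology generating Σ, e.g. Lebesgue measure on [0,1]) and the McShane integral equals the Bochner integral. -/

import Mathlib

open MeasureTheory Topology Filter Set

section Defs

variable {Ω : Type*} [MeasurableSpace Ω] [TopologicalSpace Ω]
variable {X : Type*} [NormedAddCommGroup X] [NormedSpace ℝ X]

/-- A gauge on a topological space: an assignment of an open neighbourhood to each point. -/
def IsGauge (Δ : Ω → Set Ω) : Prop := ∀ s, IsOpen (Δ s) ∧ s ∈ Δ s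

/-- A generalized McShane partition: a disjoint sequence of measurable sets of finite
measure with tags, covering `Ω` up to a `μ`-null set. -/
def IsMcShanePartition (μ : Measure Ω) (E : ℕ → Set Ω) (_t : ℕ → Ω) : Prop :=
  (∀ i, MeasurableSet (E i)) ∧ Pairwise (Function.onFun Disjoint E) ∧
    (∀ i, μ (E i) < ⊤) ∧ μ (Set.univ \ ⋃ i, E i) = 0

/-- A partition is `Δ`-fine if each set is contained in the gauge-neighbourhood of its tag. -/
def IsFine (Δ : Ω → Set Ω) (E : ℕ → Set Ω) (t : ℕ → Ω) : Prop := ∀ i, E i ⊆ Δ (t i)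

/-- `f` is McShane integrable with integral `w`. -/
def McShaneIntegrableTo (μ : Measure Ω) (f : Ω → X) (w : X) : Prop :=
  ∀ ε > (0 : ℝ), ∃ Δ : Ω → Set Ω, IsGauge Δ ∧ ∀ E t, IsMcShanePartition μ E t → IsFine Δ E t →
    Filter.limsup (fun n => ‖w - ∑ i ∈ Finset.range n, (μ (E i)).toReal • f (t i)‖) atTop ≤ ε

end Defs

/-!
Cut `Ω` into countably many measurable pieces `P k` on which `f` oscillates by at most `ε / 2`
almost everywhere: preimages of small balls around a dense sequence of the separable essential
range of `f`, plus null pieces (measurable by completeness) sorting the rest by the size of `‖f‖`.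
Outer regularity enlarges each `P k` to an open `U k` with `∑ (1 + sup_{P k} ‖f‖) μ (U k \ P k)`
small, and the gauge sends `s` to `U k` for a piece `P k ∋ s`. In a fine partition, the part
`E i ∩ P k` of `E i` contributes at most `ε / 2 * μ (E i)` to the Riemann sum error, while the
parts `E i \ P k` all lie in the small set `⋃ k, U k \ P k`, where the error is controlled by the
absolute continuity of `∫ ‖f‖` and the bound on `‖f (t i)‖`.
-/

open scoped ENNReal NNReal

section

variable {Ω : Type*} [MeasurableSpace Ω]

theorem exists_isOpen_superset_tsum_mul_measure_sdiff_lt [TopologicalSpace Ω] (μ : Measure Ω)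
    [IsFiniteMeasure μ] [μ.OuterRegular] {ι : Type*} [Countable ι] {P : ι → Set Ω}
    (hP : ∀ k, MeasurableSet (P k)) (c : ι → ℝ≥0) {θ : ℝ≥0∞} (hθ : θ ≠ 0) :
    ∃ U : ι → Set Ω, (∀ k, P k ⊆ U k ∧ IsOpen (U k)) ∧ ∑' k, c k * μ (U k \ P k) < θ := by
  obtain ⟨v, hv0, hv⟩ := ENNReal.exists_pos_sum_of_countable' hθ ι
  have hU : ∀ k, ∃ U, P k ⊆ U ∧ IsOpen U ∧ c k * μ (U \ P k) ≤ v k := by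
    intro k
    obtain ⟨U, hPU, hU, -, hUP⟩ := (hP k).exists_isOpen_sdiff_lt (measure_ne_top μ _)
      (ENNReal.div_pos (hv0 k).ne' ENNReal.coe_ne_top).ne'
    exact ⟨U, hPU, hU, (mul_le_mul_right hUP.le _).trans ENNReal.mul_div_le⟩
  choose U hPU hU hle using hU
  exact ⟨U, fun k => ⟨hPU k, hU k⟩, (ENNReal.tsum_le_tsum hle).trans_lt hv⟩

theorem tsum_mul_measure_le_of_subset {μ : Measure Ω} {ι κ : Type*} [Countable ι]
    {F : ι → Set Ω} {G : κ → Set Ω} {σ : ι → κ} (hF : ∀ i, MeasurableSet (F i))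
    (hdisj : Pairwise (Function.onFun Disjoint F)) (hsub : ∀ i, F i ⊆ G (σ i)) (c : κ → ℝ≥0∞) :
    ∑' i, c (σ i) * μ (F i) ≤ ∑' k, c k * μ (G k) := by
  rw [← ENNReal.tsum_fiberwise _ σ]
  refine ENNReal.tsum_le_tsum fun k => ?_
  have hdisj_k : Pairwise (Function.onFun Disjoint fun i : σ ⁻¹' {k} => F i) :=
    fun i j hij => hdisj (Subtype.coe_injective.ne hij)
  calc ∑' i : σ ⁻¹' {k}, c (σ i) * μ (F i) = c k * μ (⋃ i : σ ⁻¹' {k}, F i) := by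
        rw [measure_iUnion hdisj_k fun i => hF i, ← ENNReal.tsum_mul_left]
        exact tsum_congr fun i => by rw [show σ i = k from i.2]
    _ ≤ c k * μ (G k) := by
        gcongr
        exact iUnion_subset fun i => (hsub i).trans_eq (congrArg G i.2)

end

section

variable {Ω : Type*} [MeasurableSpace Ω] {X : Type*} [NormedAddCommGroup X] {μ : Measure Ω}
  {f : Ω → X}

theorem limsup_norm_sub_sum_le_of_hasSum {a b : ℕ → X} {w : X} {C : ℝ} (ha : HasSum a w)
    (hC : ∀ n, ∑ i ∈ Finset.range n, ‖a i - b i‖ ≤ C) :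
    limsup (fun n => ‖w - ∑ i ∈ Finset.range n, b i‖) atTop ≤ C := by
  have hle : ∀ n, ‖w - ∑ i ∈ Finset.range n, b i‖ ≤ ‖w - ∑ i ∈ Finset.range n, a i‖ + C := by
    intro n
    calc ‖w - ∑ i ∈ Finset.range n, b i‖
        = ‖(w - ∑ i ∈ Finset.range n, a i) + ∑ i ∈ Finset.range n, (a i - b i)‖ := by
          rw [Finset.sum_sub_distrib, sub_add_sub_cancel]
      _ ≤ ‖w - ∑ i ∈ Finset.range n, a i‖ + ∑ i ∈ Finset.range n, ‖a i - b i‖ :=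
          (norm_add_le _ _).trans (add_le_add_right (norm_sum_le _ _) _)
      _ ≤ ‖w - ∑ i ∈ Finset.range n, a i‖ + C := add_le_add_right (hC n) _
  have htend : Tendsto (fun n => ‖w - ∑ i ∈ Finset.range n, a i‖ + C) atTop (𝓝 C) := by
    have := (tendsto_iff_norm_sub_tendsto_zero.1 ha.tendsto_sum_nat).add_const C
    simpa only [norm_sub_rev, zero_add] using this
  calc limsup (fun n => ‖w - ∑ i ∈ Finset.range n, b i‖) atTop
      ≤ limsup (fun n => ‖w - ∑ i ∈ Finset.range n, a i‖ + C) atTop :=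
        limsup_le_limsup (Eventually.of_forall hle)
          (isCoboundedUnder_le_of_le atTop fun _ => norm_nonneg _) htend.isBoundedUnder_le
    _ = C := htend.limsup_eq

theorem MeasureTheory.Integrable.exists_pos_setIntegral_norm_lt (hf : Integrable f μ) {ε : ℝ}
    (hε : 0 < ε) :
    ∃ δ > 0, ∀ s, μ s < δ → ∫ ω in s, ‖f ω‖ ∂μ < ε := by
  obtain ⟨δ, hδ, h⟩ := exists_pos_setLIntegral_lt_of_measure_lt hf.hasFiniteIntegral.ne
    (ENNReal.ofReal_pos.2 hε).ne'
  refine ⟨δ, hδ, fun s hs => ?_⟩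
  rw [integral_norm_eq_lintegral_enorm hf.aestronglyMeasurable.restrict]
  exact ENNReal.toReal_lt_of_lt_ofReal (h s hs)

/-- The oscillation is only asked almost everywhere so that the null set where `f` leaves its
separable essential range can be covered by null pieces. -/
structure IsOscillationCover (μ : Measure Ω) (f : Ω → X) (η : ℝ) {ι : Type*} (P : ι → Set Ω)
    (M : ι → ℝ≥0) : Prop where
  measurableSet : ∀ k, MeasurableSet (P k)
  exists_mem : ∀ s, ∃ k, s ∈ P k
  norm_le : ∀ k, ∀ t ∈ P k, ‖f t‖ ≤ M k
  ae_norm_sub_le : ∀ k, ∀ t ∈ P k, ∀ᵐ ω ∂μ.restrict (P k), ‖f ω - f t‖ ≤ η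

theorem exists_isOscillationCover [μ.IsComplete] (hf : AEStronglyMeasurable f μ) {η : ℝ}
    (hη : 0 < η) : ∃ (P : ℕ ⊕ ℕ → Set Ω) (M : ℕ ⊕ ℕ → ℝ≥0), IsOscillationCover μ f η P M := by
  borelize X
  have hfm : Measurable f := aemeasurable_iff_measurable.1 hf.aemeasurable
  obtain ⟨T, ⟨c, hc, hTc⟩, hfT⟩ := hf.isSeparable_ae_range
  obtain ⟨x, hx⟩ := (hc.insert 0).exists_eq_range (insert_nonempty 0 c)
  set B : ℕ → Set Ω := fun j => f ⁻¹' Metric.ball (x j) (η / 2)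
  set R : Set Ω := (⋃ j, B j)ᶜ
  have hR : μ R = 0 := by
    refine measure_mono_null (fun ω (hω : ω ∈ R) (hωT : f ω ∈ T) => hω ?_) (ae_iff.1 hfT)
    have hωx : f ω ∈ closure (range x) := hx ▸ closure_mono (subset_insert 0 c) (hTc hωT)
    obtain ⟨_, ⟨j, rfl⟩, hj⟩ := Metric.mem_closure_iff.1 hωx (η / 2) (half_pos hη)
    exact mem_iUnion.2 ⟨j, Metric.mem_ball.2 hj⟩
  refine ⟨Sum.elim B fun m => R ∩ f ⁻¹' Metric.closedBall 0 m,
    Sum.elim (fun j => ‖x j‖₊ + η.toNNReal) fun m => m, ⟨?_, fun s => ?_, ?_, ?_⟩⟩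
  · rintro (j | m)
    · exact hfm Metric.isOpen_ball.measurableSet
    · exact (MeasurableSet.iUnion fun j => hfm Metric.isOpen_ball.measurableSet).compl.inter
        (hfm Metric.isClosed_closedBall.measurableSet)
  · by_cases hs : s ∈ ⋃ j, B j
    · obtain ⟨j, hj⟩ := mem_iUnion.1 hs
      exact ⟨.inl j, hj⟩
    · exact ⟨.inr ⌈‖f s‖⌉₊, hs, mem_closedBall_zero_iff.2 (Nat.le_ceil _)⟩
  · rintro (j | m) t ht
    · have := norm_le_of_mem_closedBall (Metric.ball_subset_closedBall ht)
      simp only [Sum.elim_inl, NNReal.coe_add, coe_nnnorm, Real.coe_toNNReal _ hη.le]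
      linarith
    · exact mem_closedBall_zero_iff.1 ht.2
  · rintro (j | m) t ht
    · refine ae_restrict_of_forall_mem (hfm Metric.isOpen_ball.measurableSet) fun ω hω => ?_
      rw [← dist_eq_norm]
      linarith [dist_triangle_right (f ω) (f t) (x j), Metric.mem_ball.1 hω, Metric.mem_ball.1 ht]
    · simp [Measure.restrict_eq_zero.2 (measure_mono_null inter_subset_left hR)]

variable [NormedSpace ℝ X]

theorem IsMcShanePartition.hasSum_setIntegral {E : ℕ → Set Ω} {t : ℕ → Ω}
    (hE : IsMcShanePartition μ E t) (hf : Integrable f μ) :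
    HasSum (fun i => ∫ ω in E i, f ω ∂μ) (∫ ω, f ω ∂μ) := by
  obtain ⟨hmeas, hdisj, -, hnull⟩ := hE
  have hcover : μ.restrict (⋃ i, E i) = μ := by
    refine Measure.restrict_eq_self_of_ae_mem (ae_iff.2 ?_)
    rwa [← compl_ofPred, ofPred_mem_eq, compl_eq_univ_sdiff]
  simpa only [hcover] using hasSum_integral_iUnion hmeas hdisj hf.integrableOn

theorem norm_setIntegral_sub_smul_le_inter_sdiff [IsFiniteMeasure μ] (hf : Integrable f μ)
    {E P : Set Ω} (hP : MeasurableSet P) (x : X) :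
    ‖∫ ω in E, f ω ∂μ - μ.real E • x‖ ≤
      ‖∫ ω in E ∩ P, f ω ∂μ - μ.real (E ∩ P) • x‖ +
        (∫ ω in E \ P, ‖f ω‖ ∂μ + ‖x‖ * μ.real (E \ P)) := by
  rw [← integral_inter_add_sdiff hP hf.integrableOn, ← measureReal_inter_add_sdiff hP, add_smul,
    add_sub_add_comm]
  refine (norm_add_le _ _).trans (add_le_add_right ((norm_sub_le _ _).trans ?_) _)
  rw [norm_smul, Real.norm_of_nonneg measureReal_nonneg, mul_comm]
  exact add_le_add_left (norm_integral_le_integral_norm _) _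

theorem IsOscillationCover.norm_setIntegral_sub_smul_le [CompleteSpace X] [IsFiniteMeasure μ]
    {η : ℝ} {ι : Type*} {P : ι → Set Ω} {M : ι → ℝ≥0} (hPM : IsOscillationCover μ f η P M)
    (hf : Integrable f μ) {k : ι} {t : Ω} (ht : t ∈ P k) {A : Set Ω} (hA : A ⊆ P k) :
    ‖∫ ω in A, f ω ∂μ - μ.real A • f t‖ ≤ η * μ.real A := by
  rw [← setIntegral_const, ← integral_sub hf.integrableOn (integrableOn_const (measure_ne_top _ _))]
  exact norm_setIntegral_le_of_norm_le_const_ae (measure_lt_top _ _)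
    (ae_restrict_of_ae_restrict_of_subset hA (hPM.ae_norm_sub_le k t ht))

theorem IsOscillationCover.sum_norm_setIntegral_sub_smul_le [CompleteSpace X] [IsFiniteMeasure μ]
    {η : ℝ} {ι : Type*} [Countable ι] {P : ι → Set Ω} {M : ι → ℝ≥0}
    (hPM : IsOscillationCover μ f η P M) (hf : Integrable f μ) (hη : 0 ≤ η) {U : ι → Set Ω}
    (hUM : ∑' k, (M k : ℝ≥0∞) * μ (U k \ P k) ≠ ∞) {E : ℕ → Set Ω} {t : ℕ → Ω}
    (hE : IsMcShanePartition μ E t) {σ : ℕ → ι} (hσ : ∀ i, t i ∈ P (σ i) ∧ E i ⊆ U (σ i))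
    (n : ℕ) :
    ∑ i ∈ Finset.range n, ‖∫ ω in E i, f ω ∂μ - μ.real (E i) • f (t i)‖ ≤
      η * μ.real univ + ∫ ω in ⋃ k, U k \ P k, ‖f ω‖ ∂μ +
        (∑' k, (M k : ℝ≥0∞) * μ (U k \ P k)).toReal := by
  obtain ⟨hEm, hdisj, -, -⟩ := hE
  set F : ℕ → Set Ω := fun i => E i \ P (σ i)
  have hFm : ∀ i, MeasurableSet (F i) := fun i => (hEm i).diff (hPM.measurableSet _)
  have hFdisj : Pairwise (Function.onFun Disjoint F) :=
    fun i j hij => (hdisj hij).mono sdiff_subset sdiff_subset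
  have hFU : ∀ i, F i ⊆ U (σ i) \ P (σ i) := fun i => sdiff_subset_sdiff (hσ i).2 subset_rfl
  have hterm : ∀ i, ‖∫ ω in E i, f ω ∂μ - μ.real (E i) • f (t i)‖ ≤
      η * μ.real (E i ∩ P (σ i)) + ∫ ω in F i, ‖f ω‖ ∂μ + M (σ i) * μ.real (F i) := by
    intro i
    refine (norm_setIntegral_sub_smul_le_inter_sdiff hf (hPM.measurableSet (σ i)) _).trans ?_
    rw [add_assoc]
    gcongr
    · exact hPM.norm_setIntegral_sub_smul_le hf (hσ i).1 inter_subset_right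
    · exact hPM.norm_le _ _ (hσ i).1
  have hsumA : ∑ i ∈ Finset.range n, μ.real (E i ∩ P (σ i)) ≤ μ.real univ := by
    rw [← measureReal_biUnion_finset
      (fun i _ j _ hij => (hdisj hij).mono inter_subset_left inter_subset_left)
      fun i _ => (hEm i).inter (hPM.measurableSet _)]
    exact measureReal_mono (subset_univ _)
  have hsumF : ∑ i ∈ Finset.range n, ∫ ω in F i, ‖f ω‖ ∂μ ≤ ∫ ω in ⋃ k, U k \ P k, ‖f ω‖ ∂μ := by
    rw [← integral_biUnion_finset _ (fun i _ => hFm i) (fun i _ j _ hij => hFdisj hij)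
      fun i _ => hf.norm.integrableOn]
    refine setIntegral_mono_set hf.norm.integrableOn (Eventually.of_forall fun ω => norm_nonneg _)
      (Eventually.of_forall ?_)
    exact iUnion₂_subset fun i _ => (hFU i).trans (subset_iUnion (fun k => U k \ P k) (σ i))
  have hsumM : ∑ i ∈ Finset.range n, (M (σ i) : ℝ) * μ.real (F i) ≤
      (∑' k, (M k : ℝ≥0∞) * μ (U k \ P k)).toReal := by
    have hfin : ∀ i ∈ Finset.range n, (M (σ i) : ℝ≥0∞) * μ (F i) ≠ ∞ :=
      fun i _ => ENNReal.mul_ne_top ENNReal.coe_ne_top (measure_ne_top μ _)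
    calc ∑ i ∈ Finset.range n, (M (σ i) : ℝ) * μ.real (F i)
        = (∑ i ∈ Finset.range n, (M (σ i) : ℝ≥0∞) * μ (F i)).toReal := by
          simp only [ENNReal.toReal_sum hfin, ENNReal.toReal_mul, ENNReal.coe_toReal,
            measureReal_def]
      _ ≤ (∑' k, (M k : ℝ≥0∞) * μ (U k \ P k)).toReal :=
          ENNReal.toReal_mono hUM ((ENNReal.sum_le_tsum _).trans
            (tsum_mul_measure_le_of_subset hFm hFdisj hFU _))
  calc ∑ i ∈ Finset.range n, ‖∫ ω in E i, f ω ∂μ - μ.real (E i) • f (t i)‖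
      ≤ ∑ i ∈ Finset.range n,
          (η * μ.real (E i ∩ P (σ i)) + ∫ ω in F i, ‖f ω‖ ∂μ + M (σ i) * μ.real (F i)) :=
        Finset.sum_le_sum fun i _ => hterm i
    _ = η * ∑ i ∈ Finset.range n, μ.real (E i ∩ P (σ i)) +
          ∑ i ∈ Finset.range n, ∫ ω in F i, ‖f ω‖ ∂μ +
            ∑ i ∈ Finset.range n, (M (σ i) : ℝ) * μ.real (F i) := by
        rw [Finset.sum_add_distrib, Finset.sum_add_distrib, Finset.mul_sum]
    _ ≤ _ := by gcongr

end

theorem mcShane_of_bochner_general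
    {Ω : Type*} [MeasurableSpace Ω] [TopologicalSpace Ω]
    {X : Type*} [NormedAddCommGroup X] [NormedSpace ℝ X] [CompleteSpace X]
    (μ : Measure Ω) [IsProbabilityMeasure μ] [μ.IsComplete]
    [μ.OuterRegular]
    (f : Ω → X) (hf : Integrable f μ) :
    McShaneIntegrableTo μ f (∫ ω, f ω ∂μ) := by
  intro ε hε
  have hε4 : 0 < ε / 4 := by positivity
  obtain ⟨P, M, hPM⟩ := exists_isOscillationCover hf.aestronglyMeasurable (half_pos hε)
  obtain ⟨δ, hδ, hsmall⟩ := hf.exists_pos_setIntegral_norm_lt hε4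
  obtain ⟨U, hPU, hUθ⟩ := exists_isOpen_superset_tsum_mul_measure_sdiff_lt μ hPM.measurableSet
    (fun k => 1 + M k) (lt_min hδ (ENNReal.ofReal_pos.2 hε4)).ne'
  have hU : μ (⋃ k, U k \ P k) < δ := calc
    μ (⋃ k, U k \ P k) ≤ ∑' k, μ (U k \ P k) := measure_iUnion_le _
    _ ≤ ∑' k, ((1 + M k : ℝ≥0) : ℝ≥0∞) * μ (U k \ P k) :=
        ENNReal.tsum_le_tsum fun k => le_mul_of_one_le_left' (by simp)
    _ < δ := hUθ.trans_le (min_le_left _ _)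
  have hM : ∑' k, (M k : ℝ≥0∞) * μ (U k \ P k) ≤ ENNReal.ofReal (ε / 4) :=
    (ENNReal.tsum_le_tsum fun k => by gcongr; simp).trans (hUθ.le.trans (min_le_right _ _))
  choose σ hσ using hPM.exists_mem
  refine ⟨fun s => U (σ s), fun s => ⟨(hPU _).2, (hPU _).1 (hσ s)⟩, fun E t hE hfine => ?_⟩
  refine limsup_norm_sub_sum_le_of_hasSum (hE.hasSum_setIntegral hf) fun n => ?_
  calc _ ≤ ε / 2 * μ.real univ + ∫ ω in ⋃ k, U k \ P k, ‖f ω‖ ∂μ +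
        (∑' k, (M k : ℝ≥0∞) * μ (U k \ P k)).toReal :=
        hPM.sum_norm_setIntegral_sub_smul_le hf (half_pos hε).le
          (ne_top_of_le_ne_top ENNReal.ofReal_ne_top hM) hE (fun i => ⟨hσ _, hfine i⟩) n
    _ ≤ ε / 2 * 1 + ε / 4 + ε / 4 := by
        gcongr
        · simp
        · exact (hsmall _ hU).le
        · exact ENNReal.toReal_le_of_le_ofReal hε4.le hM
    _ = ε := by ring

/-- On a complete quasi-Radon outer regular probability space, every Bochner integrable
function `f : Ω → X` into a Banach space is McShane integrable, and the McShane integral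
equals the Bochner integral. -/
theorem mcShane_of_bochner
    {Ω : Type*} [MeasurableSpace Ω] [TopologicalSpace Ω] [OpensMeasurableSpace Ω]
    {X : Type*} [NormedAddCommGroup X] [NormedSpace ℝ X] [CompleteSpace X]
    (μ : Measure Ω) [IsProbabilityMeasure μ] [μ.IsComplete]
    [μ.OuterRegular] [μ.WeaklyRegular]
    (htau : ∀ 𝒢 : Set (Set Ω), (∀ G ∈ 𝒢, IsOpen G) → 𝒢.Nonempty →
      DirectedOn (· ⊆ ·) 𝒢 → μ (⋃₀ 𝒢) = ⨆ G ∈ 𝒢, μ G)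
    (f : Ω → X) (hf : Integrable f μ) :
    McShaneIntegrableTo μ f (∫ ω, f ω ∂μ) :=
  mcShane_of_bochner_general μ f hf
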